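/- For every real a and every real t there exists ε > 0 such that for all real z with |z| < ε one has cos z − t·sin z > 0 and the series ∑_{n=0}^∞ Q_n^{(a)}(t)·z^n/n! converges to (cos z − t·sin z)^{−a} (real power). -/

import Mathlib

open Polynomial

/-- The derivative polynomials `Q_n^{(a)}`:
`Q_0^{(a)} = 1`, `Q_{n+1}^{(a)} = (1+t²)·(Q_n^{(a)})' + a·t·Q_n^{(a)}`. -/
noncomputable def polyQ (a : ℝ) : ℕ → Polynomial ℝ
  | 0 => 1
  | n + 1 => (1 + X ^ 2) * derivative (polyQ a n) + C a * X * polyQ a n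

/-!
With `c(z) = cos z - t sin z` and `g(z) = (sin z + t cos z) / c(z)` one has `c' = -g c` and
`g' = 1 + g²`, so `f = c^(-a)` satisfies `f' = a g f`. The recurrence defining `Q_n^{(a)}` is then
exactly the derivative of `Q_n^{(a)}(g) f`, whence `f⁽ⁿ⁾ = Q_n^{(a)}(g) f` wherever `c > 0`; at
`z = 0` this is `Q_n^{(a)}(t)`. Since `f` is real analytic at `0`, its Taylor series converges
to it near `0`.
-/

open Filter Topology Real

theorem AnalyticAt.eventually_hasSum_iteratedDeriv {𝕜 F : Type*} [NontriviallyNormedField 𝕜]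
    [CharZero 𝕜] [NormedAddCommGroup F] [NormedSpace 𝕜 F] [CompleteSpace F] {f : 𝕜 → F} {x : 𝕜}
    (hf : AnalyticAt 𝕜 f x) :
    ∀ᶠ y in 𝓝 0, HasSum (fun n => (n.factorial : 𝕜)⁻¹ • y ^ n • iteratedDeriv n f x)
      (f (x + y)) := by
  obtain ⟨p, r, hp⟩ := hf
  filter_upwards [Metric.eball_mem_nhds 0 hp.r_pos] with y hy
  convert hp.hasSum_iteratedFDeriv hy using 2 with n
  rw [iteratedFDeriv_apply_eq_iteratedDeriv_mul_prod, Finset.prod_const, Finset.card_univ,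
    Fintype.card_fin]

theorem AnalyticAt.rpow_const_of_pos {f : ℝ → ℝ} {x : ℝ} (p : ℝ) (hf : AnalyticAt ℝ f x)
    (hfx : 0 < f x) : AnalyticAt ℝ (fun z => f z ^ p) x := by
  refine ((hf.log hfx).mul (analyticAt_const (v := p))).rexp'.congr ?_
  filter_upwards [hf.continuousAt.eventually (lt_mem_nhds hfx)] with z hz
  rw [rpow_def_of_pos hz, Pi.mul_apply]

theorem hasDerivAt_eval_polyQ_comp_mul {a : ℝ} {g u : ℝ → ℝ} {z : ℝ}
    (hg : HasDerivAt g (1 + g z ^ 2) z) (hu : HasDerivAt u (a * g z * u z) z) (n : ℕ) :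
    HasDerivAt (fun z => (polyQ a n).eval (g z) * u z) ((polyQ a (n + 1)).eval (g z) * u z) z := by
  refine ((((polyQ a n).hasDerivAt (g z)).comp z hg).mul hu).congr_deriv ?_
  simp only [polyQ, eval_add, eval_mul, eval_one, eval_X, eval_pow, eval_C, Function.comp_apply]
  ring

theorem iteratedDeriv_eqOn_eval_polyQ_comp_mul {a : ℝ} {g u : ℝ → ℝ} {U : Set ℝ} (hU : IsOpen U)
    (hg : ∀ z ∈ U, HasDerivAt g (1 + g z ^ 2) z) (hu : ∀ z ∈ U, HasDerivAt u (a * g z * u z) z)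
    (n : ℕ) : Set.EqOn (iteratedDeriv n u) (fun z => (polyQ a n).eval (g z) * u z) U := by
  induction n with
  | zero => intro z _; simp [polyQ]
  | succ n ih =>
    intro z hz
    rw [iteratedDeriv_succ, (eventuallyEq_of_mem (hU.mem_nhds hz) ih).deriv_eq]
    exact (hasDerivAt_eval_polyQ_comp_mul (hg z hz) (hu z hz) n).deriv

theorem hasDerivAt_cos_sub_mul_sin (t z : ℝ) :
    HasDerivAt (fun z => cos z - t * sin z) (-(sin z + t * cos z)) z :=
  ((hasDerivAt_cos z).sub ((hasDerivAt_sin z).const_mul t)).congr_deriv (by ring)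

section

variable {t z : ℝ}

theorem hasDerivAt_sin_add_mul_cos_div (hz : cos z - t * sin z ≠ 0) :
    HasDerivAt (fun z => (sin z + t * cos z) / (cos z - t * sin z))
      (1 + ((sin z + t * cos z) / (cos z - t * sin z)) ^ 2) z := by
  have hs : HasDerivAt (fun z => sin z + t * cos z) (cos z - t * sin z) z :=
    ((hasDerivAt_sin z).add ((hasDerivAt_cos z).const_mul t)).congr_deriv (by ring)
  refine (hs.div (hasDerivAt_cos_sub_mul_sin t z) hz).congr_deriv ?_
  field_simp
  ring

theorem hasDerivAt_cos_sub_mul_sin_rpow (a : ℝ) (hz : 0 < cos z - t * sin z) :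
    HasDerivAt (fun z => (cos z - t * sin z) ^ (-a))
      (a * ((sin z + t * cos z) / (cos z - t * sin z)) * (cos z - t * sin z) ^ (-a)) z := by
  refine ((hasDerivAt_cos_sub_mul_sin t z).rpow_const (p := -a) (Or.inl hz.ne')).congr_deriv ?_
  rw [rpow_sub hz, rpow_one]
  ring

end

theorem iteratedDeriv_cos_sub_mul_sin_rpow_zero (a t : ℝ) (n : ℕ) :
    iteratedDeriv n (fun z => (cos z - t * sin z) ^ (-a)) 0 = (polyQ a n).eval t := by
  have hU : IsOpen {z | 0 < cos z - t * sin z} :=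
    isOpen_lt continuous_const (by fun_prop)
  have h := iteratedDeriv_eqOn_eval_polyQ_comp_mul hU
    (fun z hz => hasDerivAt_sin_add_mul_cos_div hz.ne')
    (fun z hz => hasDerivAt_cos_sub_mul_sin_rpow a hz) n (x := 0) (by simp)
  simpa using h

theorem analyticAt_cos_sub_mul_sin_rpow (a t : ℝ) :
    AnalyticAt ℝ (fun z => (cos z - t * sin z) ^ (-a)) 0 :=
  (analyticAt_cos.sub (analyticAt_const.mul analyticAt_sin)).rpow_const_of_pos (-a) (by simp)

theorem stmt3 (a t : ℝ) :
    ∃ ε > 0, ∀ z : ℝ, |z| < ε →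
      0 < Real.cos z - t * Real.sin z ∧
      HasSum (fun n : ℕ => (polyQ a n).eval t * z ^ n / n.factorial)
        ((Real.cos z - t * Real.sin z) ^ (-a)) := by
  have hpos : ∀ᶠ z in 𝓝 0, 0 < cos z - t * sin z :=
    (by fun_prop : Continuous fun z => cos z - t * sin z).continuousAt.eventually
      (lt_mem_nhds (by simp))
  have hsum := (analyticAt_cos_sub_mul_sin_rpow a t).eventually_hasSum_iteratedDeriv
  obtain ⟨ε, hε, h⟩ := Metric.eventually_nhds_iff.mp (hpos.and hsum)
  refine ⟨ε, hε, fun z hz => ?_⟩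
  obtain ⟨hc, hs⟩ := h (by simpa using hz)
  refine ⟨hc, ?_⟩
  simp only [iteratedDeriv_cos_sub_mul_sin_rpow_zero, zero_add, smul_eq_mul] at hs
  exact hs.congr_fun fun n => by ring
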